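/- arXiv:1411.0750 — 2 statements merged into one kernel-verified Lean document; each statement's English description precedes it below -/
import Mathlib

section
/- Fix e ≥ 3. Let k ≥ 0 and let μ = (μ_1,...,μ_N) be a partition of d with N > k+1 parts and μ_{k+1} > 1, and let λ = (d-k, 1^k). Define T^λ_μ as the λ-tableau keeping the entries T^μ(2,1),...,T^μ(k+1,1) in the first column of λ and filling the remaining values in increasing order along the first row. Then the residue sequence of T^λ_μ equals i^μ if and only if there exist positive integers a_1,...,a_N and 0 ≤ m < e such that μ = (a_1 e, ..., a_k e, a_{k+1} e − 1, ..., a_{N-1} e − 1, a_N e − 1 − m). -/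
/- A partition `μ` is encoded as its list of parts `L`.  `resTrow e L r` is the
residue of the node containing `r` in the row-reading standard tableau `T^μ`. -/

/-- Residue of the entry `r` of the row-reading tableau of the partition `L`. -/
def resTrow (e : ℕ) (L : List ℕ) (r : ℕ) : ZMod e :=
  let row := ((Finset.range L.length).filter fun a => (L.take a).sum < r).card - 1
  let col := r - (L.take row).sum
  (col : ZMod e) - 1 - (row : ZMod e)

/-- The entries of the first column of `T^μ` below the first row, down to row
`k` (0-indexed): these are the entries placed in the leg of the hook in `T^λ_μ`. -/
def legEntries (L : List ℕ) (k : ℕ) : Finset ℕ :=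
  (Finset.Icc 1 k).image fun a => (L.take a).sum + 1

/-- Residue of the entry `r` of `T^λ_μ`, the `(d-k, 1^k)`-tableau whose leg
carries the first-column entries `T^μ(2,1), ..., T^μ(k+1,1)` of `T^μ` and whose
first row carries the remaining entries in increasing order. -/
def resHook (e : ℕ) (L : List ℕ) (k : ℕ) (r : ℕ) : ZMod e :=
  if r ∈ legEntries L k then
    -(((((Finset.Icc 1 k).filter fun a => (L.take a).sum + 1 ≤ r).card : ℕ)) : ZMod e)
  else ((r - 1 - (((legEntries L k).filter fun x => x < r).card) : ℕ) : ZMod e)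


/-!
Write `S_j` for the sum of the first `j` parts, so that row `j` (counted from `0`) of `T^μ` holds
the entries `S_j < r ≤ S_{j+1}` and `r` has residue `(r - S_j) - 1 - j` there. In `T^λ_μ` a leg
entry `S_a + 1` keeps its residue `-a`, while an entry `r` of row `j` off the leg lands in column
`r - min j k` of the first row, so its residue grows by `S_j + (j - k)`. Since the parts decrease
and `μ_{k+1} > 1`, every row has an entry off the leg, hence the residue sequences agree iff
`e ∣ S_j + (j - k)` for all `j < N`. Taking differences, this says `e ∣ μ_j` for the first `k`
parts and `e ∣ μ_j + 1` for the following ones except the last, on which there is no condition: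
that is the stated shape.
-/

namespace List

theorem strictMonoOn_sum_take {L : List ℕ} (hpos : ∀ x ∈ L, 0 < x) :
    StrictMonoOn (fun i => (L.take i).sum) (Set.Iic L.length) :=
  strictMonoOn_Iic_of_lt_succ fun m hm => by
    have := hpos _ (getElem_mem hm)
    simp only [Order.succ_eq_add_one, sum_take_succ L m hm]
    omega

theorem sum_take_lt_sum_take {L : List ℕ} (hpos : ∀ x ∈ L, 0 < x) {a b : ℕ} (hab : a < b)
    (hb : b ≤ L.length) : (L.take a).sum < (L.take b).sum :=
  strictMonoOn_sum_take hpos (Set.mem_Iic.2 (hab.le.trans hb)) (Set.mem_Iic.2 hb) hab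

theorem sum_take_le_sum_take (L : List ℕ) {a b : ℕ} (hab : a ≤ b) :
    (L.take a).sum ≤ (L.take b).sum :=
  L.monotone_sum_take hab

theorem le_sum_take {L : List ℕ} (hpos : ∀ x ∈ L, 0 < x) {j : ℕ} (hj : j ≤ L.length) :
    j ≤ (L.take j).sum := by
  simpa [hj] using length_le_sum_of_one_le (L.take j) fun x hx => hpos x (mem_of_mem_take hx)

theorem exists_sum_take_lt_le : ∀ {L : List ℕ} {r : ℕ}, 0 < r → r ≤ L.sum →
    ∃ j < L.length, (L.take j).sum < r ∧ r ≤ (L.take (j + 1)).sum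
  | [], _, hr, hrL => by simp at hrL; omega
  | x :: L, r, hr, hrL => by
    by_cases hrx : r ≤ x
    · exact ⟨0, by simp, by simpa using hr, by simpa using hrx⟩
    · obtain ⟨j, hj, h1, h2⟩ := exists_sum_take_lt_le (L := L) (r := r - x) (by omega)
        (by simp at hrL; omega)
      exact ⟨j + 1, by simpa using hj, by simp; omega, by simp; omega⟩

theorem eq_ofFn_iff_forall_getD {α : Type*} {L : List α} {f : Fin L.length → α} (d : α) :
    L = ofFn f ↔ ∀ j (hj : j < L.length), L.getD j d = f ⟨j, hj⟩ := by
  simp only [ext_getElem_iff, length_ofFn, List.getElem_ofFn, true_and]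
  exact forall₂_congr fun j hj => by simp [hj]

end List

section Residues

variable {e k j r : ℕ} {L : List ℕ}

theorem resTrow_eq_of_row (hj : j < L.length) (h1 : (L.take j).sum < r)
    (h2 : r ≤ (L.take (j + 1)).sum) :
    resTrow e L r = ((r - (L.take j).sum : ℕ) : ZMod e) - 1 - j := by
  have hrow : ((Finset.range L.length).filter fun a => (L.take a).sum < r) =
      Finset.range (j + 1) := by
    ext a
    simp only [Finset.mem_filter, Finset.mem_range]
    constructor
    · rintro ⟨-, ha⟩
      by_contra! hja
      have := List.sum_take_le_sum_take L hja
      omega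
    · intro ha
      exact ⟨by omega, (List.sum_take_le_sum_take L (Nat.lt_succ_iff.1 ha)).trans_lt h1⟩
  simp [resTrow, hrow]

theorem card_legEntries (hpos : ∀ x ∈ L, 0 < x) (hk : k ≤ L.length) :
    (legEntries L k).card = k := by
  rw [legEntries, Finset.card_image_of_injOn, Nat.card_Icc, Nat.add_sub_cancel]
  intro a ha b hb hab
  simp only [Finset.coe_Icc, Set.mem_Icc] at ha hb
  exact (List.strictMonoOn_sum_take hpos).injOn (Set.mem_Iic.2 (ha.2.trans hk))
    (Set.mem_Iic.2 (hb.2.trans hk)) (Nat.add_right_cancel hab)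

theorem eq_of_mem_legEntries_of_row (hpos : ∀ x ∈ L, 0 < x) (hk : k < L.length)
    (h1 : (L.take j).sum < r) (h2 : r ≤ (L.take (j + 1)).sum) (hr : r ∈ legEntries L k) :
    r = (L.take j).sum + 1 ∧ 1 ≤ j ∧ j ≤ k := by
  obtain ⟨a, ha, rfl⟩ := Finset.mem_image.1 hr
  rw [Finset.mem_Icc] at ha
  obtain rfl : a = j := by
    by_contra hne
    rcases Nat.lt_or_gt_of_ne hne with h | h
    · have := List.sum_take_lt_sum_take hpos (show a < a + 1 by omega) (by omega)
      have := List.sum_take_le_sum_take L (show a + 1 ≤ j by omega)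
      omega
    · have := List.sum_take_le_sum_take L (show j + 1 ≤ a by omega)
      omega
  omega

theorem legEntries_filter_lt (hr : r ∉ legEntries L k) (h1 : (L.take j).sum < r)
    (h2 : r ≤ (L.take (j + 1)).sum) :
    (legEntries L k).filter (· < r) = legEntries L (min j k) := by
  ext x
  simp only [legEntries, Finset.mem_filter, Finset.mem_image, Finset.mem_Icc]
  constructor
  · rintro ⟨⟨a, ⟨ha1, hak⟩, rfl⟩, hlt⟩
    refine ⟨a, ⟨ha1, le_min ?_ hak⟩, rfl⟩
    by_contra! hja
    have := List.sum_take_le_sum_take L (show j + 1 ≤ a by omega)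
    omega
  · rintro ⟨a, ⟨ha1, haj⟩, rfl⟩
    refine ⟨⟨a, ⟨ha1, haj.trans (min_le_right j k)⟩, rfl⟩, ?_⟩
    have := List.sum_take_le_sum_take L (haj.trans (min_le_left j k))
    have hne : (L.take a).sum + 1 ≠ r := fun h =>
      hr (h ▸ Finset.mem_image_of_mem _ (Finset.mem_Icc.2 ⟨ha1, haj.trans (min_le_right j k)⟩))
    omega

theorem resHook_eq_resTrow_add_of_not_mem (hpos : ∀ x ∈ L, 0 < x) (hk : k ≤ L.length) (hj : j < L.length)
    (h1 : (L.take j).sum < r) (h2 : r ≤ (L.take (j + 1)).sum) (hr : r ∉ legEntries L k) :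
    resHook e L k r = resTrow e L r + (((L.take j).sum + (j - k) : ℕ) : ZMod e) := by
  have hcount : ((legEntries L k).filter fun x => x < r).card = min j k := by
    rw [legEntries_filter_lt hr h1 h2, card_legEntries hpos (by omega)]
  have hjS := List.le_sum_take hpos hj.le
  have key : (r - 1 - min j k) + 1 + j = (r - (L.take j).sum) + ((L.take j).sum + (j - k)) := by
    omega
  have key' := congrArg (Nat.cast : ℕ → ZMod e) key
  rw [resHook, if_neg hr, hcount, resTrow_eq_of_row hj h1 h2]
  simp only [Nat.cast_add, Nat.cast_one] at key' ⊢
  linear_combination key'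

theorem resHook_legEntry_eq_resTrow (hpos : ∀ x ∈ L, 0 < x) (hk : k < L.length) {a : ℕ} (ha1 : 1 ≤ a)
    (hak : a ≤ k) :
    resHook e L k ((L.take a).sum + 1) = resTrow e L ((L.take a).sum + 1) := by
  have hmem : (L.take a).sum + 1 ∈ legEntries L k :=
    Finset.mem_image_of_mem _ (Finset.mem_Icc.2 ⟨ha1, hak⟩)
  have hcount : ((Finset.Icc 1 k).filter fun b => (L.take b).sum + 1 ≤ (L.take a).sum + 1) =
      Finset.Icc 1 a := by
    ext b
    simp only [Finset.mem_filter, Finset.mem_Icc, add_le_add_iff_right]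
    constructor
    · rintro ⟨⟨hb1, hbk⟩, hb⟩
      refine ⟨hb1, not_lt.1 fun hab => ?_⟩
      have := List.sum_take_lt_sum_take hpos hab (by omega)
      omega
    · rintro ⟨hb1, hba⟩
      exact ⟨⟨hb1, hba.trans hak⟩, List.sum_take_le_sum_take L hba⟩
  rw [resHook, if_pos hmem, hcount, Nat.card_Icc,
    resTrow_eq_of_row (j := a) (by omega) (by omega)
      (List.sum_take_lt_sum_take hpos (show a < a + 1 by omega) (by omega))]
  simp

theorem exists_not_mem_legEntries_of_row (hpos : ∀ x ∈ L, 0 < x) (hk : k < L.length)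
    (hj : j < L.length) (hbig : j ≤ k → 1 < L.getD j 0) :
    ∃ r, (L.take j).sum < r ∧ r ≤ (L.take (j + 1)).sum ∧ r ∉ legEntries L k := by
  have hsucc := List.sum_take_succ L j hj
  rw [← List.getD_eq_getElem (d := 0)] at hsucc
  by_cases hjk : 1 ≤ j ∧ j ≤ k
  · have := hbig hjk.2
    refine ⟨(L.take j).sum + 2, by omega, by omega, fun hr => ?_⟩
    have := (eq_of_mem_legEntries_of_row (j := j) hpos hk (by omega) (by omega) hr).1
    omega
  · have := hpos _ (List.getElem_mem hj)
    rw [← List.getD_eq_getElem (d := 0)] at this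
    exact ⟨(L.take j).sum + 1, by omega, by omega,
      fun hr => hjk (eq_of_mem_legEntries_of_row (j := j) hpos hk (by omega) (by omega) hr).2⟩

theorem resHook_eq_resTrow_iff (hpos : ∀ x ∈ L, 0 < x) (hk : k < L.length)
    (hbig : ∀ j ≤ k, 1 < L.getD j 0) :
    (∀ r, 1 ≤ r → r ≤ L.sum → resHook e L k r = resTrow e L r) ↔
      ∀ j < L.length, e ∣ (L.take j).sum + (j - k) := by
  constructor
  · intro H j hj
    obtain ⟨r, h1, h2, hr⟩ := exists_not_mem_legEntries_of_row hpos hk hj (hbig j)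
    have hsum : r ≤ L.sum := h2.trans <| by
      simpa using List.sum_take_le_sum_take L (show j + 1 ≤ L.length from hj)
    have := H r (by omega) hsum
    rw [resHook_eq_resTrow_add_of_not_mem hpos hk.le hj h1 h2 hr, add_eq_left] at this
    exact (ZMod.natCast_eq_zero_iff _ _).1 this
  · intro H r hr1 hr2
    obtain ⟨j, hj, h1, h2⟩ := List.exists_sum_take_lt_le hr1 hr2
    by_cases hr : r ∈ legEntries L k
    · obtain ⟨a, ha, rfl⟩ := Finset.mem_image.1 hr
      exact resHook_legEntry_eq_resTrow hpos hk (Finset.mem_Icc.1 ha).1 (Finset.mem_Icc.1 ha).2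
    · rw [resHook_eq_resTrow_add_of_not_mem hpos hk.le hj h1 h2 hr, (ZMod.natCast_eq_zero_iff _ _).2 (H j hj),
        add_zero]

end Residues

section Shape

variable {e k : ℕ} {L : List ℕ}

theorem sum_take_succ_add_sub {j : ℕ} (hj : j < L.length) :
    (L.take (j + 1)).sum + (j + 1 - k) =
      (L.take j).sum + (j - k) + if j < k then L.getD j 0 else L.getD j 0 + 1 := by
  rw [List.sum_take_succ _ _ hj, List.getD_eq_getElem _ _ hj]
  split_ifs <;> omega

theorem dvd_sum_take_add_sub_iff :
    (∀ j < L.length, e ∣ (L.take j).sum + (j - k)) ↔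
      ∀ j, j + 1 < L.length → e ∣ if j < k then L.getD j 0 else L.getD j 0 + 1 := by
  constructor
  · intro h j hj
    have := h (j + 1) hj
    rw [sum_take_succ_add_sub (by omega)] at this
    exact (Nat.dvd_add_right (h j (by omega))).1 this
  · intro h j hj
    induction j with
    | zero => simp
    | succ j ih =>
      rw [sum_take_succ_add_sub (by omega)]
      exact dvd_add (ih (by omega)) (h j hj)

theorem exists_hookPart (he : 0 < e) (hpos : ∀ x ∈ L, 0 < x) (hk : k < L.length)
    (hD : ∀ j, j + 1 < L.length → e ∣ if j < k then L.getD j 0 else L.getD j 0 + 1)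
    {x : ℕ} (hx : x < L.length) :
    ∃ a, 0 < a ∧ L.getD x 0 =
      if x < k then a * e
      else if x + 1 < L.length then a * e - 1
      else a * e - 1 - (e - 1 - L.getD (L.length - 1) 0 % e) := by
  have hx0 : 0 < L.getD x 0 := by
    rw [List.getD_eq_getElem _ _ hx]
    exact hpos _ (List.getElem_mem hx)
  by_cases hxk : x < k
  · have hdvd : e ∣ L.getD x 0 := by simpa [hxk] using hD x (by omega)
    refine ⟨L.getD x 0 / e, Nat.div_pos (Nat.le_of_dvd hx0 hdvd) he, ?_⟩
    rw [if_pos hxk, Nat.div_mul_cancel hdvd]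
  by_cases hxl : x + 1 < L.length
  · have hdvd : e ∣ L.getD x 0 + 1 := by simpa [hxk] using hD x hxl
    refine ⟨(L.getD x 0 + 1) / e, Nat.div_pos (Nat.le_of_dvd (by omega) hdvd) he, ?_⟩
    rw [if_neg hxk, if_pos hxl, Nat.div_mul_cancel hdvd, Nat.add_sub_cancel]
  · refine ⟨L.getD x 0 / e + 1, Nat.succ_pos _, ?_⟩
    obtain rfl : x = L.length - 1 := by omega
    have := Nat.div_add_mod' (L.getD (L.length - 1) 0) e
    have := Nat.mod_lt (L.getD (L.length - 1) 0) he
    rw [if_neg hxk, if_neg hxl, Nat.add_mul, Nat.one_mul]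
    omega

theorem exists_hookShape_iff (he : 0 < e) (hpos : ∀ x ∈ L, 0 < x) (hk : k < L.length) :
    (∃ a : ℕ → ℕ, ∃ m, m < e ∧ (∀ x, x < L.length → 0 < a x) ∧
      L = List.ofFn fun x : Fin L.length =>
        if (x : ℕ) < k then a (x : ℕ) * e
        else if (x : ℕ) + 1 < L.length then a (x : ℕ) * e - 1
        else a (x : ℕ) * e - 1 - m) ↔
      ∀ j, j + 1 < L.length → e ∣ if j < k then L.getD j 0 else L.getD j 0 + 1 := by
  simp only [List.eq_ofFn_iff_forall_getD (d := 0)]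
  constructor
  · rintro ⟨a, m, -, ha, hLa⟩ j hj
    rw [hLa j (by omega)]
    by_cases hjk : j < k
    · simp only [if_pos hjk]
      exact dvd_mul_left e (a j)
    · simp only [if_neg hjk, if_pos hj]
      rw [Nat.sub_add_cancel (Nat.mul_pos (ha j (by omega)) he)]
      exact dvd_mul_left e (a j)
  · intro hD
    choose! a ha using fun x (hx : x < L.length) => exists_hookPart he hpos hk hD hx
    exact ⟨a, _, by omega, fun x hx => (ha x hx).1, fun x hx => (ha x hx).2⟩

end Shape

/-- Lemma 5.5(iii): for a partition `μ` with `N > k+1` parts and `μ_{k+1} > 1`,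
the residue sequence of `T^λ_μ` equals the residue sequence `i^μ` of `T^μ` iff
`μ = (a_1 e, ..., a_k e, a_{k+1} e - 1, ..., a_{N-1} e - 1, a_N e - 1 - m)` for
some positive integers `a_1, ..., a_N` and `0 ≤ m < e`. -/
theorem residue_match_hook_case_long (e d k N : ℕ) (he : 3 ≤ e) (L : List ℕ)
    (hlen : L.length = N) (hN : k + 1 < N) (hbig : 1 < L.getD k 0)
    (hpos : ∀ x ∈ L, 0 < x) (hsort : L.Pairwise (· ≥ ·)) (hd : L.sum = d) :
    (∀ r, 1 ≤ r → r ≤ d → resHook e L k r = resTrow e L r) ↔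
    (∃ a : ℕ → ℕ, ∃ m, m < e ∧ (∀ x, x < N → 0 < a x) ∧
      L = List.ofFn fun x : Fin N =>
        if (x : ℕ) < k then a (x : ℕ) * e
        else if (x : ℕ) + 1 < N then a (x : ℕ) * e - 1
        else a (x : ℕ) * e - 1 - m) := by
  subst hlen hd
  have hlarge : ∀ j ≤ k, 1 < L.getD j 0 := by
    intro j hj
    rw [List.getD_eq_getElem _ _ (by omega)] at hbig ⊢
    exact hbig.trans_le (hsort.sortedGE.getElem_ge_getElem_of_le hj)
  rw [resHook_eq_resTrow_iff hpos (by omega) hlarge, dvd_sum_take_add_sub_iff,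
    exists_hookShape_iff (by omega) hpos (by omega)]
end

section
/- Fix a prime p ≥ 3 and e = p. Let μ = (μ_1,...,μ_N) be a partition of d of the form μ_x = a_x p − 1 for x < N and μ_N = a_N p − 1 − m with a_x positive integers and 0 ≤ m < p, satisfying ν_p(a_x) ≥ ℓ_p(a_{x+1} − 1) for 1 ≤ x < N. Then deg(T^{(d)}) − deg(T^μ) = N − ⌈(N+m)/p⌉, where deg is the combinatorial degree of a standard tableau and T^ν denotes the row-reading standard ν-tableau. -/
/- A partition is encoded as its list of parts `L` (weakly decreasing, positive),
with `L.getD r 0` the length of (0-indexed) row `r`.  Below, `degT e L` is the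
combinatorial degree of the row-reading standard tableau of shape `L`. -/

/-- Rows at which a node may be added to the partition `L`. -/
def addableRows (L : List ℕ) : Finset ℕ :=
  (Finset.range (L.length + 1)).filter fun r => r = 0 ∨ L.getD r 0 < L.getD (r - 1) 0

/-- Rows at which a node may be removed from the partition `L`. -/
def removableRows (L : List ℕ) : Finset ℕ :=
  (Finset.range L.length).filter fun r => L.getD (r + 1) 0 < L.getD r 0

/-- Residue `(b - a) mod e` of the addable node in row `r`. -/
def addRes (e : ℕ) (L : List ℕ) (r : ℕ) : ZMod e :=
  (L.getD r 0 : ZMod e) - (r : ZMod e)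

/-- Residue `(b - a) mod e` of the removable node in row `r`. -/
def remRes (e : ℕ) (L : List ℕ) (r : ℕ) : ZMod e :=
  (L.getD r 0 : ZMod e) - 1 - (r : ZMod e)

/-- `d_A(ν)` for the removable node `A` at the end of row `x`: addable minus
removable nodes of the same residue strictly below `A`. -/
def dACount (e : ℕ) (L : List ℕ) (x : ℕ) : ℤ :=
  (((addableRows L).filter fun r => x < r ∧ addRes e L r = remRes e L x).card : ℤ) -
  (((removableRows L).filter fun r => x < r ∧ remRes e L r = remRes e L x).card : ℤ)

/-- Remove the last node (in row-reading order) of the partition `L`. -/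
def shrink (L : List ℕ) : List ℕ :=
  if L.getLast! ≤ 1 then L.dropLast else L.dropLast ++ [L.getLast! - 1]

/-- The degree recursion for the row-reading tableau, with explicit fuel. -/
def degTAux (e : ℕ) : ℕ → List ℕ → ℤ
  | 0, _ => 0
  | _ + 1, [] => 0
  | n + 1, L => dACount e L (L.length - 1) + degTAux e n (shrink L)

/-- Degree of the row-reading standard tableau of shape `L`. -/
def degT (e : ℕ) (L : List ℕ) : ℤ := degTAux e (L.sum + L.length) L

/- In the row-reading tableau the node removed at each step ends the last row, so the only node
strictly below it that can contribute to `d_A` is the addable node starting the next row. Its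
residue matches that of `A` exactly when `e` divides the length of the last row, hence
`deg(T^λ) = ∑ ⌊λ_i / e⌋`. Writing `μ_x = a_x p - 1 - m_x`, where `m_x = 0` for `x < N` and
`m_N = m < p`, this gives `deg(T^μ) = ∑ (a_x - 1)`, while `d = p ∑ a_x - (N + m)` gives
`⌊d / p⌋ = ∑ a_x - ⌈(N + m) / p⌉`. -/

section RowReadingDegree

variable (e : ℕ)

theorem getD_append_singleton_length (L : List ℕ) (j : ℕ) : (L ++ [j]).getD L.length 0 = j := by
  simp

theorem getD_append_singleton_of_length_lt (L : List ℕ) (j r : ℕ) (h : L.length < r) :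
    (L ++ [j]).getD r 0 = 0 :=
  List.getD_eq_default _ _ (by simp; omega)

theorem dACount_append_singleton (L : List ℕ) (j : ℕ) :
    dACount e (L ++ [j]) L.length = if 0 < j ∧ e ∣ j then 1 else 0 := by
  have hlen : (L ++ [j]).length = L.length + 1 := by simp
  have hrem : (removableRows (L ++ [j])).filter (fun r => L.length < r ∧
      remRes e (L ++ [j]) r = remRes e (L ++ [j]) L.length) = ∅ := by
    apply Finset.filter_false_of_mem
    intro r hr
    simp only [removableRows, Finset.mem_filter, Finset.mem_range, hlen] at hr
    omega
  have hres : addRes e (L ++ [j]) (L.length + 1) = remRes e (L ++ [j]) L.length ↔ e ∣ j := by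
    rw [addRes, remRes, getD_append_singleton_of_length_lt _ _ _ (by omega),
      getD_append_singleton_length, ← ZMod.natCast_eq_zero_iff]
    push_cast
    constructor <;> intro h <;> linear_combination -h
  have hadd : (addableRows (L ++ [j])).filter (fun r => L.length < r ∧
      addRes e (L ++ [j]) r = remRes e (L ++ [j]) L.length) =
      if 0 < j ∧ e ∣ j then {L.length + 1} else ∅ := by
    ext r
    simp only [addableRows, Finset.mem_filter, Finset.mem_range, hlen]
    constructor
    · rintro ⟨⟨hr, hcorner⟩, hlt, hr_res⟩
      obtain rfl : r = L.length + 1 := by omega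
      rw [getD_append_singleton_of_length_lt _ _ _ (by omega), Nat.add_sub_cancel,
        getD_append_singleton_length] at hcorner
      rw [if_pos ⟨by omega, hres.mp hr_res⟩, Finset.mem_singleton]
    · split_ifs with hj
      · intro hr
        obtain rfl := Finset.mem_singleton.mp hr
        refine ⟨⟨by omega, Or.inr ?_⟩, by omega, hres.mpr hj.2⟩
        rw [getD_append_singleton_of_length_lt _ _ _ (by omega), Nat.add_sub_cancel,
          getD_append_singleton_length]
        exact hj.1
      · simp
  rw [dACount, hrem, hadd]
  split_ifs <;> simp

theorem shrink_append_singleton (L : List ℕ) (j : ℕ) :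
    shrink (L ++ [j]) = if j ≤ 1 then L else L ++ [j - 1] := by
  simp [shrink]

theorem sum_map_div_append_singleton (L : List ℕ) (j : ℕ) :
    ((L ++ [j]).map (· / e)).sum =
      ((shrink (L ++ [j])).map (· / e)).sum + if 0 < j ∧ e ∣ j then 1 else 0 := by
  rw [shrink_append_singleton]
  rcases j with _ | _ | j
  · simp
  · rcases Nat.lt_or_ge 1 e with he | he
    · simp [Nat.div_eq_of_lt he, Nat.dvd_one, he.ne']
    · interval_cases e <;> simp
  · simp [Nat.succ_div (a := j + 1), add_assoc]

theorem degTAux_succ_of_ne_nil {n : ℕ} {L : List ℕ} (hL : L ≠ []) :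
    degTAux e (n + 1) L = dACount e L (L.length - 1) + degTAux e n (shrink L) := by
  cases L
  · contradiction
  · rfl

theorem degTAux_eq_sum_map_div (n : ℕ) (L : List ℕ) (hn : L.sum + L.length ≤ n) :
    degTAux e n L = ((L.map (· / e)).sum : ℤ) := by
  induction n generalizing L with
  | zero => obtain rfl : L = [] := List.eq_nil_of_length_eq_zero (by omega); rfl
  | succ n ih =>
    obtain rfl | ⟨L, j, rfl⟩ := List.eq_nil_or_concat L
    · rfl
    rw [List.concat_eq_append] at hn ⊢
    have hshrink : (shrink (L ++ [j])).sum + (shrink (L ++ [j])).length ≤ n := by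
      rw [shrink_append_singleton]
      split_ifs <;> simp at hn ⊢ <;> omega
    rw [degTAux_succ_of_ne_nil e (List.concat_ne_nil j L), ih _ hshrink,
      sum_map_div_append_singleton, List.length_append, List.length_singleton, Nat.add_sub_cancel,
      dACount_append_singleton]
    push_cast
    ring

theorem degT_eq_sum_map_div (L : List ℕ) : degT e L = ((L.map (· / e)).sum : ℤ) :=
  degTAux_eq_sum_map_div e _ L le_rfl

end RowReadingDegree

theorem mul_sub_one_sub_div {p a k : ℕ} (ha : 0 < a) (hk : k < p) :
    (a * p - 1 - k) / p = a - 1 := by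
  obtain ⟨b, rfl⟩ : ∃ b, a = b + 1 := ⟨a - 1, by omega⟩
  rw [Nat.add_sub_cancel, Nat.add_one_mul]
  exact Nat.div_eq_of_lt_le (by omega) (by rw [Nat.add_one_mul]; omega)

theorem mul_sub_div_add_ceil_div {p A s : ℕ} (hp : 0 < p) (hs : s ≤ p * A) :
    (p * A - s) / p + (s + p - 1) / p = A := by
  set q := (s + p - 1) / p
  have hq : p * q + (s + p - 1) % p = s + p - 1 := Nat.div_add_mod _ _
  have hr : (s + p - 1) % p < p := Nat.mod_lt _ hp
  have hqA : q ≤ A := Nat.lt_succ_iff.mp <| Nat.lt_of_mul_lt_mul_left (a := p) (by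
    rw [Nat.mul_succ]; omega)
  have hpq : p * q ≤ p * A := Nat.mul_le_mul_left p hqA
  have hsub : (A - q) * p = p * A - p * q := by rw [Nat.sub_mul, mul_comm A, mul_comm q]
  rw [Nat.div_eq_of_lt_le (k := A - q) (by omega) (by rw [Nat.add_one_mul]; omega)]
  omega

theorem deg_difference_trivial_hook_general (p N m : ℕ)
    (hN : 1 ≤ N) (hm : m < p)
    (a : Fin N → ℕ) (hapos : ∀ x, 0 < a x)
    (L : List ℕ)
    (hL : L = List.ofFn fun x : Fin N =>
      if (x : ℕ) + 1 < N then a x * p - 1 else a x * p - 1 - m)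
    (d : ℕ) (hd : d = L.sum) :
    degT p [d] - degT p L = (N : ℤ) - (((N + m + p - 1) / p : ℕ) : ℤ) := by
  set k : Fin N → ℕ := fun x => if (x : ℕ) + 1 < N then 0 else m
  have hk : ∀ x, k x < p := fun x => by dsimp only [k]; split_ifs <;> omega
  replace hL : L = List.ofFn fun x => a x * p - 1 - k x := by
    rw [hL]; congr; funext x; dsimp only [k]; split_ifs <;> rfl
  have hsum_k : ∑ x, k x = m := by
    obtain ⟨n, rfl⟩ : ∃ n, N = n + 1 := ⟨N - 1, by omega⟩
    simp [k, Fin.sum_univ_castSucc]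
  have hdeg_L : degT p L = ((∑ x, a x : ℕ) : ℤ) - N := by
    rw [degT_eq_sum_map_div, hL, List.map_ofFn, List.sum_ofFn]
    simp [mul_sub_one_sub_div (hapos _) (hk _), Nat.cast_sub (hapos _)]
  have hd_mul : d + (N + m) = p * ∑ x, a x := by
    have hterm : ∀ x, p * a x = (a x * p - 1 - k x) + 1 + k x := fun x => by
      have := (hk x).trans_le (Nat.le_mul_of_pos_left p (hapos x))
      rw [mul_comm]; omega
    rw [hd, hL, List.sum_ofFn, ← hsum_k, Finset.mul_sum, Finset.sum_congr rfl fun x _ => hterm x,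
      Finset.sum_add_distrib, Finset.sum_add_distrib]
    simp
    ring
  have hceil :=
    mul_sub_div_add_ceil_div (A := ∑ x, a x) (s := N + m) (by omega : 0 < p) (by omega)
  rw [← hd_mul, Nat.add_sub_cancel] at hceil
  rw [degT_eq_sum_map_div, hdeg_L, List.map_singleton, List.sum_singleton]
  omega

/-- For `e = p` a prime `≥ 3` and `μ = (a_1 p - 1, ..., a_{N-1} p - 1, a_N p - 1 - m)`
a partition of `d` with `ν_p(a_x) ≥ ℓ_p(a_{x+1} - 1)`, the difference of degrees
`deg(T^{(d)}) - deg(T^μ)` equals `N - ⌈(N+m)/p⌉`. -/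
theorem deg_difference_trivial_hook (p N m : ℕ) (hp : p.Prime) (hp3 : 3 ≤ p)
    (hN : 1 ≤ N) (hm : m < p)
    (a : Fin N → ℕ) (hapos : ∀ x, 0 < a x)
    (hval : ∀ (x : ℕ) (hx : x + 1 < N),
      sInf {i : ℕ | a ⟨x + 1, hx⟩ - 1 < p ^ i} ≤
        padicValNat p (a ⟨x, Nat.lt_of_succ_lt hx⟩))
    (L : List ℕ)
    (hL : L = List.ofFn fun x : Fin N =>
      if (x : ℕ) + 1 < N then a x * p - 1 else a x * p - 1 - m)
    (hpos : ∀ x ∈ L, 0 < x) (hsort : L.Pairwise (· ≥ ·))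
    (d : ℕ) (hd : d = L.sum) :
    degT p [d] - degT p L = (N : ℤ) - (((N + m + p - 1) / p : ℕ) : ℤ) :=
  deg_difference_trivial_hook_general p N m hN hm a hapos L hL d hd
end
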